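/- arXiv:1605.03273 — 2 statements merged into one kernel-verified Lean document; each statement's English description precedes it below -/
import Mathlib

section
/- For the secondary Hochschild complex C^n(A,B,ε) = Hom_k(A^{⊗(n+1)} ⊗ B^{⊗ n(n+1)/2}, k) with the cyclic operator λ given by (λφ)(matrix with rows a_0,…,a_n) = (−1)^n φ(cyclically permuted matrix with first row a_n, b_{0,n},…,b_{n-1,n}), the operator λ satisfies λ^{n+1} = id on C^n(A,B,ε). -/
open scoped TensorProduct
open MulOpposite PiTensorProduct

noncomputable section

/-- Index set for the strictly upper triangular positions of an `m × m` matrix. -/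
abbrev UT (m : ℕ) := {p : Fin m × Fin m // p.1 < p.2}

/-- The tensor space `A^{⊗ m} ⊗ B^{⊗ m(m-1)/2}` in its matrix representation. -/
def TS (k A B : Type) [Field k] [Ring A] [Algebra k A] [CommRing B] [Algebra k B]
    (m : ℕ) : Type :=
  (⨂[k] _ : Fin m, A) ⊗[k] (⨂[k] _ : UT m, B)

variable (k A B : Type) [Field k] [Ring A] [Algebra k A] [CommRing B] [Algebra k B]

instance (m : ℕ) : AddCommGroup (TS k A B m) :=
  inferInstanceAs (AddCommGroup ((⨂[k] _ : Fin m, A) ⊗[k] (⨂[k] _ : UT m, B)))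

instance (m : ℕ) : Module k (TS k A B m) :=
  inferInstanceAs (Module k ((⨂[k] _ : Fin m, A) ⊗[k] (⨂[k] _ : UT m, B)))

/-- The secondary Hochschild cochain space `C^n(A,B,ε) = Hom_k(A^{⊗(n+1)} ⊗ B^{⊗ n(n+1)/2}, k)`. -/
abbrev Cc (n : ℕ) : Type := TS k A B (n + 1) →ₗ[k] k

/-- The pure tensor (generator) determined by diagonal entries `a` and
upper-triangular entries `β` (read at indices `< m`). -/
def gen (m : ℕ) (a : ℕ → A) (β : ℕ → ℕ → B) : TS k A B m :=
  (tprod k fun i : Fin m => a i) ⊗ₜ[k] (tprod k fun p : UT m => β p.1.1 p.1.2)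

/-- Diagonal of the matrix obtained by merging diagonal entries `i`, `i+1` via
`a_i a_{i+1} ε(b_{i,i+1})`. -/
def mergeA (ε : B →ₐ[k] A) (i : ℕ) (a : ℕ → A) (β : ℕ → ℕ → B) : ℕ → A :=
  fun j => if j < i then a j else if j = i then a i * a (i + 1) * ε (β i (i + 1)) else a (j + 1)

/-- Preimages of the index `p` under the monotone surjection collapsing `i` and `i+1`. -/
def preim (i p : ℕ) : Finset ℕ :=
  if p < i then {p} else if p = i then {i, i + 1} else {p + 1}

/-- `B`-entries of the matrix obtained by merging rows/columns `i` and `i+1`. -/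
def mergeB (i : ℕ) (β : ℕ → ℕ → B) : ℕ → ℕ → B :=
  fun p q => ∏ u ∈ preim i p, ∏ v ∈ preim i q, β u v

/-- Diagonal of the "cyclic merge": `a_m a_0 ε(b_{0,m})` in position `0`
(top index `m`). -/
def cmergeA (ε : B →ₐ[k] A) (m : ℕ) (a : ℕ → A) (β : ℕ → ℕ → B) : ℕ → A :=
  fun j => if j = 0 then a m * a 0 * ε (β 0 m) else a j

/-- `B`-entries of the cyclic merge: first row becomes `b_{q,m} b_{0,q}`. -/
def cmergeB (m : ℕ) (β : ℕ → ℕ → B) : ℕ → ℕ → B :=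
  fun p q => if p = 0 then β q m * β 0 q else β p q

/-- Diagonal of the cyclically rotated matrix: `a_n` moves to position `0`. -/
def rotA (n : ℕ) (a : ℕ → A) : ℕ → A :=
  fun j => if j = 0 then a n else a (j - 1)

/-- `B`-entries of the cyclically rotated matrix: the first row becomes
`b_{0,n}, …, b_{n-1,n}`. -/
def rotB (n : ℕ) (β : ℕ → ℕ → B) : ℕ → ℕ → B :=
  fun p q => if p = 0 then β (q - 1) n else β (p - 1) (q - 1)

/-!
Rotating the matrix reindexes its diagonal along the cyclic predecessor `c = cyclicPred n` of
`{0, …, n}` and its `B`-entries along `c` acting on unordered pairs `{p, q}`. Since `c` has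
order `n + 1`, `λ^{n+1} φ` evaluates `φ` on the original matrix with sign
`((-1)^n)^{n+1} = 1`, and the generators span the tensor space.
-/

theorem TensorProduct.ext_tprod_tmul_tprod {R ι κ M N P : Type*} [CommSemiring R]
    [AddCommMonoid M] [Module R M] [AddCommMonoid N] [Module R N]
    [AddCommMonoid P] [Module R P]
    {f g : (⨂[R] _ : ι, M) ⊗[R] (⨂[R] _ : κ, N) →ₗ[R] P}
    (h : ∀ x y, f (tprod R x ⊗ₜ tprod R y) = g (tprod R x ⊗ₜ tprod R y)) : f = g :=
  TensorProduct.ext <| PiTensorProduct.ext <| MultilinearMap.ext fun x =>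
    PiTensorProduct.ext <| MultilinearMap.ext fun y => h x y

lemma exists_gen_eq (m : ℕ) (x : Fin m → A) (y : UT m → B) :
    ∃ a β, gen k A B m a β = tprod k x ⊗ₜ[k] tprod k y := by
  refine ⟨fun j => if h : j < m then x ⟨j, h⟩ else 0,
    fun p q => if h : p < q ∧ q < m then y ⟨(⟨p, h.1.trans h.2⟩, ⟨q, h.2⟩), h.1⟩
      else 1, ?_⟩
  unfold gen
  congr 2
  · funext i; simp [i.isLt]
  · funext ⟨⟨i, j⟩, hij⟩; simp [hij, j.isLt]

lemma TS.linearMap_ext_gen {m : ℕ} {P : Type*} [AddCommMonoid P] [Module k P]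
    {f g : TS k A B m →ₗ[k] P} (h : ∀ a β, f (gen k A B m a β) = g (gen k A B m a β)) :
    f = g :=
  TensorProduct.ext_tprod_tmul_tprod fun x y => by
    obtain ⟨a, β, hgen⟩ := exists_gen_eq k A B m x y
    exact hgen ▸ h a β

lemma gen_congr (m : ℕ) {a a' : ℕ → A} {β β' : ℕ → ℕ → B}
    (ha : ∀ j, j < m → a j = a' j)
    (hβ : ∀ p q, p < q → q < m → β p q = β' p q) :
    gen k A B m a β = gen k A B m a' β' := by
  unfold gen
  congr 2
  · exact funext fun i => ha i i.isLt
  · exact funext fun p => hβ p.1.1 p.1.2 p.2 p.1.2.isLt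

theorem LinearMap.pow_apply_of_apply_eq_smul {R M P S X : Type*} [CommSemiring R]
    [AddCommMonoid M] [Module R M] [AddCommMonoid P] [Module R P] [Monoid S] [MulAction S P]
    (T : Module.End R (M →ₗ[R] P)) (g : X → M) (r : X → X) (c : S)
    (hT : ∀ φ x, T φ (g x) = c • φ (g (r x))) (n : ℕ) (φ : M →ₗ[R] P) (x : X) :
    (T ^ n) φ (g x) = c ^ n • φ (g (r^[n] x)) := by
  induction n generalizing x with
  | zero => simp
  | succ n ih =>
    rw [pow_succ', Module.End.mul_apply, hT, ih, smul_smul, ← pow_succ',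
      Function.iterate_succ_apply]

def cyclicPred (n j : ℕ) : ℕ := if j = 0 then n else j - 1

lemma cyclicPred_iterate_of_le {n i j : ℕ} (h : i ≤ j) : (cyclicPred n)^[i] j = j - i := by
  induction i with
  | zero => rfl
  | succ i ih =>
    rw [Function.iterate_succ_apply', ih (by omega), cyclicPred, if_neg (by omega)]
    omega

lemma cyclicPred_iterate_self {n j : ℕ} (h : j ≤ n) : (cyclicPred n)^[n + 1] j = j := by
  have hn : n + 1 = (n - j) + (j + 1) := by omega
  rw [hn, Function.iterate_add_apply, Function.iterate_succ_apply',
    cyclicPred_iterate_of_le le_rfl, Nat.sub_self, cyclicPred, if_pos rfl,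
    cyclicPred_iterate_of_le (Nat.sub_le n j)]
  omega

lemma rotA_eq_comp {X : Type} (n : ℕ) (a : ℕ → X) : rotA X n a = a ∘ cyclicPred n :=
  funext fun _ => (apply_ite a _ _ _).symm

lemma rotA_iterate {X : Type} (n i : ℕ) (a : ℕ → X) :
    (rotA X n)^[i] a = a ∘ (cyclicPred n)^[i] := by
  induction i generalizing a with
  | zero => rfl
  | succ i ih => rw [Function.iterate_succ_apply, ih, Function.iterate_succ', rotA_eq_comp]; rfl

-- `b_{p,q}` belongs to the unordered pair `{p, q}`, which `c` may reverse.
lemma rotB_apply {X : Type} {n p q : ℕ} (β : ℕ → ℕ → X) (hpq : p < q) (hq : q ≤ n) :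
    rotB X n β p q =
      β (min (cyclicPred n p) (cyclicPred n q)) (max (cyclicPred n p) (cyclicPred n q)) := by
  unfold rotB cyclicPred
  rcases Nat.eq_zero_or_pos p with rfl | hp
  · rw [if_pos rfl, if_pos rfl, if_neg (by omega), min_eq_right (by omega), max_eq_left (by omega)]
  · rw [if_neg hp.ne', if_neg hp.ne', if_neg (by omega), min_eq_left (by omega),
      max_eq_right (by omega)]

lemma rotB_iterate {X : Type} {n p q : ℕ} (i : ℕ) (β : ℕ → ℕ → X) (hpq : p < q)
    (hq : q ≤ n) :
    (rotB X n)^[i] β p q =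
      β (min ((cyclicPred n)^[i] p) ((cyclicPred n)^[i] q))
        (max ((cyclicPred n)^[i] p) ((cyclicPred n)^[i] q)) := by
  induction i generalizing p q with
  | zero => simp only [Function.iterate_zero_apply, min_eq_left hpq.le, max_eq_right hpq.le]
  | succ i ih =>
    rw [Function.iterate_succ_apply', rotB_apply _ hpq hq, Function.iterate_succ_apply,
      Function.iterate_succ_apply]
    have hne : cyclicPred n p ≠ cyclicPred n q := by
      unfold cyclicPred; split_ifs <;> omega
    have hle : cyclicPred n p ≤ n ∧ cyclicPred n q ≤ n := by
      unfold cyclicPred; split_ifs <;> omega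
    rcases hne.lt_or_gt with h | h
    · rw [min_eq_left h.le, max_eq_right h.le, ih h hle.2]
    · rw [min_eq_right h.le, max_eq_left h.le, ih h hle.1, min_comm, max_comm]

lemma gen_rot_iterate_self (n : ℕ) (a : ℕ → A) (β : ℕ → ℕ → B) :
    gen k A B (n + 1) ((rotA A n)^[n + 1] a) ((rotB B n)^[n + 1] β) = gen k A B (n + 1) a β := by
  refine gen_congr k A B (n + 1) (fun j hj => ?_) (fun p q hpq hq => ?_)
  · rw [rotA_iterate, Function.comp_apply, cyclicPred_iterate_self (by omega)]
  · rw [rotB_iterate _ _ hpq (by omega), cyclicPred_iterate_self (by omega),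
      cyclicPred_iterate_self (by omega), min_eq_left hpq.le, max_eq_right hpq.le]

theorem secondary_cyclic_operator_order
    (lam : ∀ n : ℕ, Module.End k (Cc k A B n))
    (hlam : ∀ (n : ℕ) (φ : Cc k A B n) (a : ℕ → A) (β : ℕ → ℕ → B),
      lam n φ (gen k A B (n + 1) a β) =
        (-1 : ℤ) ^ n • φ (gen k A B (n + 1) (rotA A n a) (rotB B n β))) :
    ∀ n : ℕ, lam n ^ (n + 1) = 1 := by
  intro n
  refine LinearMap.ext fun φ => TS.linearMap_ext_gen k A B fun a β => ?_
  have hpow := LinearMap.pow_apply_of_apply_eq_smul (lam n)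
    (fun x : (ℕ → A) × (ℕ → ℕ → B) => gen k A B (n + 1) x.1 x.2)
    (Prod.map (rotA A n) (rotB B n)) _ (fun φ x => hlam n φ x.1 x.2) (n + 1) φ (a, β)
  rw [Prod.map_iterate, ← pow_mul, (Nat.even_mul_succ_self n).neg_one_pow, one_smul] at hpow
  exact hpow.trans (congrArg φ (gen_rot_iterate_self k A B n a β))

end
end

section
/- There is a commuting bicomplex structure: on the secondary Hochschild chains C_n(A,B,ε), the operators satisfy N(1 − λ) = (1 − λ)N = 0, N b = b' N, (1 − λ) b' = b (1 − λ), and b² = (b')² = 0, so the columns alternating between b and −b' connected by horizontal maps 1 − λ and N form a double complex C(A,B,ε). -/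
open scoped TensorProduct
open MulOpposite PiTensorProduct

noncomputable section

variable (k A B : Type) [Field k] [Ring A] [Algebra k A] [CommRing B] [Algebra k B]

/-!
The matrices underlying `TS k A B (n + 1)`, taken modulo their entries outside the `(n + 1)`-window,
form a precyclic set: the merges `dᵢ` (with the cyclic merge as last face) and the rotation `t`
satisfy `dⱼ dᵢ = dᵢ₋₁ dⱼ` for `j < i` (merging is associative because `ε` is central),
`dᵢ t = t dᵢ₋₁`, `d₀ t = dₙ₊₁` and `tⁿ⁺¹ = 1`. On the free module over such a set the identities
are formal: `b² = b'² = 0` by cancelling terms in pairs, `(1 - λ) b' = b (1 - λ)` from the cyclic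
relations, and `N b = b' N` because both sides equal `N δ₀ N`, by `δᵢ λⁱ = λⁱ δ₀` and
`λ N = N λ = N`. The pure tensors map this free module onto `TS`, carrying its `λ`, `b`, `b'`
to the given operators, so the identities descend.
-/

theorem LinearMap.finsetSum_comp {R M N P ι : Type*} [CommSemiring R] [AddCommMonoid M]
    [AddCommMonoid N] [AddCommMonoid P] [Module R M] [Module R N] [Module R P] (s : Finset ι)
    (f : ι → N →ₗ[R] P) (g : M →ₗ[R] N) : (∑ i ∈ s, f i) ∘ₗ g = ∑ i ∈ s, f i ∘ₗ g :=
  map_sum ((LinearMap.llcomp R M N P).flip g) f s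

theorem LinearMap.comp_finsetSum {R M N P ι : Type*} [CommSemiring R] [AddCommMonoid M]
    [AddCommMonoid N] [AddCommMonoid P] [Module R M] [Module R N] [Module R P] (s : Finset ι)
    (f : ι → M →ₗ[R] N) (g : N →ₗ[R] P) : g ∘ₗ (∑ i ∈ s, f i) = ∑ i ∈ s, g ∘ₗ f i :=
  map_sum (LinearMap.llcomp R M N P g) f s

theorem sum_sum_neg_one_pow_smul_eq_zero {G : Type*} [AddCommGroup G] (m : ℕ) (K : ℕ → ℕ → G)
    (hK : ∀ i j, j < i → i ≤ m + 1 → K i j = K j (i - 1)) :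
    ∑ i ∈ Finset.range (m + 2), ∑ j ∈ Finset.range (m + 1), (-1 : ℤ) ^ (i + j) • K i j = 0 := by
  rw [← Finset.sum_product']
  -- pair the term `(i, j)`, `j < i`, with the term `(j, i - 1)` of opposite sign
  refine Finset.sum_involution
    (fun p _ => if p.2 < p.1 then (p.2, p.1 - 1) else (p.2 + 1, p.1)) ?_ ?_ ?_ ?_
  · rintro ⟨i, j⟩ hp
    simp only [Finset.mem_product, Finset.mem_range] at hp
    by_cases h : j < i
    · obtain ⟨i, rfl⟩ : ∃ i', i = i' + 1 := ⟨i - 1, by omega⟩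
      simp only [if_pos h, hK (i + 1) j h (by omega), Nat.add_sub_cancel]
      rw [show i + 1 + j = (j + i) + 1 by omega, pow_succ, mul_neg_one, neg_smul,
        neg_add_cancel]
    · simp only [if_neg h, hK (j + 1) i (by omega) (by omega), Nat.add_sub_cancel]
      rw [show j + 1 + i = (i + j) + 1 by omega, pow_succ, mul_neg_one, neg_smul,
        add_neg_cancel]
  · rintro ⟨i, j⟩ _ _
    split_ifs <;> simp only [ne_eq, Prod.ext_iff] <;> omega
  · rintro ⟨i, j⟩ hp
    simp only [Finset.mem_product, Finset.mem_range] at hp ⊢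
    split_ifs <;> omega
  · rintro ⟨i, j⟩ _
    by_cases h : j < i
    · simp only [if_pos h, if_neg (show ¬ i - 1 < j by omega), Prod.mk.injEq, and_true]
      omega
    · simp only [if_neg h, if_pos (show i < j + 1 by omega), Prod.mk.injEq, true_and]
      omega

theorem LinearMap.comp_comp_eq_of_comp_eq {R M₁ M₂ M₃ N₁ N₂ N₃ : Type*} [CommSemiring R]
    [AddCommMonoid M₁] [AddCommMonoid M₂] [AddCommMonoid M₃] [AddCommMonoid N₁]
    [AddCommMonoid N₂] [AddCommMonoid N₃] [Module R M₁] [Module R M₂] [Module R M₃] [Module R N₁]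
    [Module R N₂] [Module R N₃] {G₁ : M₁ →ₗ[R] N₁} {G₂ : M₂ →ₗ[R] N₂} {G₃ : M₃ →ₗ[R] N₃}
    {f : N₂ →ₗ[R] N₃} {g : N₁ →ₗ[R] N₂} {f' : M₂ →ₗ[R] M₃} {g' : M₁ →ₗ[R] M₂}
    (hf : f ∘ₗ G₂ = G₃ ∘ₗ f') (hg : g ∘ₗ G₁ = G₂ ∘ₗ g') : (f ∘ₗ g) ∘ₗ G₁ = G₃ ∘ₗ f' ∘ₗ g' := by
  rw [LinearMap.comp_assoc, hg, ← LinearMap.comp_assoc, hf, LinearMap.comp_assoc]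

theorem LinearMap.pow_comp_eq_comp_pow {R M N : Type*} [CommSemiring R] [AddCommMonoid M]
    [AddCommMonoid N] [Module R M] [Module R N] {G : M →ₗ[R] N} {f : Module.End R N}
    {g : Module.End R M} (h : f ∘ₗ G = G ∘ₗ g) (j : ℕ) : (f ^ j) ∘ₗ G = G ∘ₗ (g ^ j) := by
  induction j with
  | zero => rfl
  | succ j ih => rw [pow_succ, pow_succ, Module.End.mul_eq_comp, Module.End.mul_eq_comp,
      LinearMap.comp_comp_eq_of_comp_eq ih h]

theorem LinearMap.one_sub_comp_eq_comp_one_sub {R M N : Type*} [CommRing R] [AddCommGroup M]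
    [AddCommGroup N] [Module R M] [Module R N] {G : M →ₗ[R] N} {f : Module.End R N}
    {g : Module.End R M} (h : f ∘ₗ G = G ∘ₗ g) : (1 - f) ∘ₗ G = G ∘ₗ (1 - g) := by
  rw [LinearMap.sub_comp, LinearMap.comp_sub, h]
  rfl

theorem LinearMap.geom_sum_comp_eq_comp_geom_sum {R M N : Type*} [CommSemiring R]
    [AddCommMonoid M] [AddCommMonoid N] [Module R M] [Module R N] {G : M →ₗ[R] N}
    {f : Module.End R N} {g : Module.End R M} (h : f ∘ₗ G = G ∘ₗ g) (m : ℕ) :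
    (∑ j ∈ Finset.range m, f ^ j) ∘ₗ G = G ∘ₗ ∑ j ∈ Finset.range m, g ^ j := by
  simp only [LinearMap.finsetSum_comp, LinearMap.comp_finsetSum, LinearMap.pow_comp_eq_comp_pow h]

theorem Finsupp.lmapDomain_pow {R M α : Type*} [Semiring R] [AddCommMonoid M] [Module R M]
    (f : α → α) (j : ℕ) : Finsupp.lmapDomain M R f ^ j = Finsupp.lmapDomain M R f^[j] := by
  induction j with
  | zero => rw [pow_zero, Function.iterate_zero, Finsupp.lmapDomain_id]; rfl
  | succ j ih => rw [pow_succ, ih, Function.iterate_succ, Finsupp.lmapDomain_comp]; rfl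

section Precyclic

-- `d n i : M (n + 1) → M n` is the `i`-th face (`0 ≤ i ≤ n + 1`) and `t n` the cyclic operator
-- of degree `n`; the relations are Loday's for a cyclic module, without degeneracies.
variable {R : Type*} [CommRing R] {M : ℕ → Type*} [∀ n, AddCommGroup (M n)]
  [∀ n, Module R (M n)] (d : ∀ n, ℕ → M (n + 1) →ₗ[R] M n) (t : ∀ n, Module.End R (M n))

def IsPresimplicial : Prop :=
  ∀ n i j, j < i → i ≤ n + 2 → d n j ∘ₗ d (n + 1) i = d n (i - 1) ∘ₗ d (n + 1) j

structure IsPrecyclic : Prop where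
  face_comp_cyc : ∀ n i, 1 ≤ i → i ≤ n + 1 → d n i ∘ₗ t (n + 1) = t n ∘ₗ d n (i - 1)
  face_zero_comp_cyc : ∀ n, d n 0 ∘ₗ t (n + 1) = d n (n + 1)
  cyc_pow : ∀ n, t n ^ (n + 1) = 1

-- `λ = (-1)ⁿ t`, `δᵢ = (-1)ⁱ dᵢ`, `b = ∑ δᵢ`, `b' = ∑_{i ≤ n} δᵢ` and `N = 1 + λ + ⋯ + λⁿ`
def signedCyc (n : ℕ) : Module.End R (M n) := (-1 : ℤ) ^ n • t n

def signedFace (n i : ℕ) : M (n + 1) →ₗ[R] M n := (-1 : ℤ) ^ i • d n i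

def hochschildBoundary (n : ℕ) : M (n + 1) →ₗ[R] M n :=
  ∑ i ∈ Finset.range (n + 2), signedFace d n i

def barBoundary (n : ℕ) : M (n + 1) →ₗ[R] M n :=
  ∑ i ∈ Finset.range (n + 1), signedFace d n i

def cyclicNorm (n : ℕ) : Module.End R (M n) :=
  ∑ j ∈ Finset.range (n + 1), signedCyc t n ^ j

variable {d t}

theorem signedCyc_pow_succ {n : ℕ} (h : t n ^ (n + 1) = 1) : signedCyc t n ^ (n + 1) = 1 := by
  rw [signedCyc, smul_pow, h, ← pow_mul, (Nat.even_mul_succ_self n).neg_one_pow, one_smul]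

theorem cyclicNorm_mul_one_sub {n : ℕ} (h : t n ^ (n + 1) = 1) :
    cyclicNorm t n * (1 - signedCyc t n) = 0 := by
  rw [cyclicNorm, geom_sum_mul_neg, signedCyc_pow_succ h, sub_self]

theorem one_sub_mul_cyclicNorm {n : ℕ} (h : t n ^ (n + 1) = 1) :
    (1 - signedCyc t n) * cyclicNorm t n = 0 := by
  rw [cyclicNorm, mul_neg_geom_sum, signedCyc_pow_succ h, sub_self]

theorem signedCyc_mul_cyclicNorm {n : ℕ} (h : t n ^ (n + 1) = 1) :
    signedCyc t n * cyclicNorm t n = cyclicNorm t n := by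
  rw [eq_comm, ← sub_eq_zero, ← one_sub_mul_cyclicNorm h, sub_mul, one_mul]

theorem cyclicNorm_mul_signedCyc {n : ℕ} (h : t n ^ (n + 1) = 1) :
    cyclicNorm t n * signedCyc t n = cyclicNorm t n := by
  rw [eq_comm, ← sub_eq_zero, ← cyclicNorm_mul_one_sub h, mul_sub, mul_one]

theorem signedCyc_pow_mul_cyclicNorm {n : ℕ} (h : t n ^ (n + 1) = 1) (j : ℕ) :
    signedCyc t n ^ j * cyclicNorm t n = cyclicNorm t n := by
  induction j with
  | zero => rw [pow_zero, one_mul]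
  | succ j ih => rw [pow_succ, mul_assoc, signedCyc_mul_cyclicNorm h, ih]

theorem cyclicNorm_mul_signedCyc_pow {n : ℕ} (h : t n ^ (n + 1) = 1) (j : ℕ) :
    cyclicNorm t n * signedCyc t n ^ j = cyclicNorm t n := by
  induction j with
  | zero => rw [pow_zero, mul_one]
  | succ j ih => rw [pow_succ', ← mul_assoc, cyclicNorm_mul_signedCyc h, ih]

theorem signedFace_comp_signedCyc (hc : IsPrecyclic d t) {n i : ℕ} (h1 : 1 ≤ i) (h2 : i ≤ n + 1) :
    signedFace d n i ∘ₗ signedCyc t (n + 1) = signedCyc t n ∘ₗ signedFace d n (i - 1) := by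
  obtain ⟨i, rfl⟩ : ∃ i', i = i' + 1 := ⟨i - 1, by omega⟩
  simp only [signedFace, signedCyc, LinearMap.smul_comp, LinearMap.comp_smul, smul_smul,
    hc.face_comp_cyc n (i + 1) h1 h2, Nat.add_sub_cancel]
  congr 1
  ring

theorem signedFace_zero_comp_signedCyc (hc : IsPrecyclic d t) (n : ℕ) :
    signedFace d n 0 ∘ₗ signedCyc t (n + 1) = signedFace d n (n + 1) := by
  simp only [signedFace, signedCyc, LinearMap.smul_comp, LinearMap.comp_smul, smul_smul,
    hc.face_zero_comp_cyc, pow_zero, mul_one]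

theorem signedFace_comp_signedCyc_pow (hc : IsPrecyclic d t) {n i : ℕ} (hi : i ≤ n + 1) :
    signedFace d n i ∘ₗ (signedCyc t (n + 1) ^ i) = (signedCyc t n ^ i) ∘ₗ signedFace d n 0 := by
  induction i with
  | zero => rw [pow_zero, pow_zero, Module.End.one_eq_id, Module.End.one_eq_id,
      LinearMap.comp_id, LinearMap.id_comp]
  | succ i ih =>
    rw [pow_succ', pow_succ', Module.End.mul_eq_comp, Module.End.mul_eq_comp,
      ← LinearMap.comp_assoc, signedFace_comp_signedCyc hc (by omega) hi, Nat.add_sub_cancel,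
      LinearMap.comp_assoc, ih (by omega), LinearMap.comp_assoc]

theorem one_sub_comp_barBoundary (hc : IsPrecyclic d t) (n : ℕ) :
    (1 - signedCyc t n) ∘ₗ barBoundary d n =
      hochschildBoundary d n ∘ₗ (1 - signedCyc t (n + 1)) := by
  have hb : hochschildBoundary d n = barBoundary d n + signedFace d n (n + 1) :=
    Finset.sum_range_succ _ _
  -- `b λ = λ b' + δ_{n+1}`, since `δ_0 λ = δ_{n+1}` and `δ_{i+1} λ = λ δ_i`
  have hbcyc : hochschildBoundary d n ∘ₗ signedCyc t (n + 1) =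
      signedCyc t n ∘ₗ barBoundary d n + signedFace d n (n + 1) := by
    rw [hochschildBoundary, barBoundary, Finset.sum_range_succ', LinearMap.add_comp,
      LinearMap.finsetSum_comp, LinearMap.comp_finsetSum, signedFace_zero_comp_signedCyc hc]
    congr 1
    refine Finset.sum_congr rfl fun i hi => ?_
    rw [signedFace_comp_signedCyc hc (by omega) (by simp at hi; omega), Nat.add_sub_cancel]
  rw [LinearMap.comp_sub, LinearMap.sub_comp, hbcyc]
  simp only [Module.End.one_eq_id, LinearMap.comp_id, LinearMap.id_comp]
  rw [hb]
  abel

-- Both sides of `N b = b' N` equal `N δ₀ N`.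
theorem barBoundary_comp_cyclicNorm_eq (hc : IsPrecyclic d t) (n : ℕ) :
    barBoundary d n ∘ₗ cyclicNorm t (n + 1) =
      cyclicNorm t n ∘ₗ signedFace d n 0 ∘ₗ cyclicNorm t (n + 1) := by
  rw [barBoundary, LinearMap.finsetSum_comp,
    show cyclicNorm t n = ∑ i ∈ Finset.range (n + 1), signedCyc t n ^ i from rfl,
    LinearMap.finsetSum_comp]
  refine Finset.sum_congr rfl fun i hi => ?_
  have hi : i ≤ n + 1 := by simp at hi; omega
  calc signedFace d n i ∘ₗ cyclicNorm t (n + 1)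
      = signedFace d n i ∘ₗ (signedCyc t (n + 1) ^ i * cyclicNorm t (n + 1)) := by
        rw [signedCyc_pow_mul_cyclicNorm (hc.cyc_pow (n + 1))]
    _ = (signedFace d n i ∘ₗ signedCyc t (n + 1) ^ i) ∘ₗ cyclicNorm t (n + 1) := rfl
    _ = _ := by rw [signedFace_comp_signedCyc_pow hc hi]; rfl

theorem cyclicNorm_comp_hochschildBoundary_eq (hc : IsPrecyclic d t) (n : ℕ) :
    cyclicNorm t n ∘ₗ hochschildBoundary d n =
      cyclicNorm t n ∘ₗ signedFace d n 0 ∘ₗ cyclicNorm t (n + 1) := by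
  have hface : ∀ i ∈ Finset.range (n + 2), cyclicNorm t n ∘ₗ signedFace d n i =
      cyclicNorm t n ∘ₗ signedFace d n 0 ∘ₗ signedCyc t (n + 1) ^ (n + 1 - i + 1) := by
    intro i hi
    have hi : i ≤ n + 1 := by simp at hi; omega
    calc cyclicNorm t n ∘ₗ signedFace d n i
        = cyclicNorm t n ∘ₗ signedFace d n i ∘ₗ signedCyc t (n + 1) ^ (n + 1 + 1) := by
          rw [signedCyc_pow_succ (hc.cyc_pow (n + 1)), Module.End.one_eq_id, LinearMap.comp_id]
      _ = cyclicNorm t n ∘ₗ (signedFace d n i ∘ₗ signedCyc t (n + 1) ^ i) ∘ₗ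
            signedCyc t (n + 1) ^ (n + 1 - i + 1) := by
          rw [show n + 1 + 1 = i + (n + 1 - i + 1) by omega, pow_add, Module.End.mul_eq_comp]
          rfl
      _ = (cyclicNorm t n * signedCyc t n ^ i) ∘ₗ signedFace d n 0 ∘ₗ
            signedCyc t (n + 1) ^ (n + 1 - i + 1) := by
          rw [signedFace_comp_signedCyc_pow hc hi]
          rfl
      _ = _ := by rw [cyclicNorm_mul_signedCyc_pow (hc.cyc_pow n)]
  -- the exponents `n + 2 - i` run over `1, …, n + 2`, and `N λ = N`
  have hsum : ∑ i ∈ Finset.range (n + 2), signedCyc t (n + 1) ^ (n + 1 - i + 1) =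
      cyclicNorm t (n + 1) := by
    rw [← cyclicNorm_mul_signedCyc (hc.cyc_pow (n + 1)), cyclicNorm, Finset.sum_mul]
    refine Finset.sum_nbij' (fun i => n + 1 - i) (fun i => n + 1 - i) ?_ ?_ ?_ ?_ ?_ <;>
      intro i hi <;> simp only [Finset.mem_range] at hi ⊢
    all_goals first | omega | rw [pow_succ]
  rw [hochschildBoundary, LinearMap.comp_finsetSum, Finset.sum_congr rfl hface,
    ← LinearMap.comp_finsetSum, ← LinearMap.comp_finsetSum, hsum]

theorem cyclicNorm_comp_hochschildBoundary (hc : IsPrecyclic d t) (n : ℕ) :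
    cyclicNorm t n ∘ₗ hochschildBoundary d n = barBoundary d n ∘ₗ cyclicNorm t (n + 1) := by
  rw [cyclicNorm_comp_hochschildBoundary_eq hc, barBoundary_comp_cyclicNorm_eq hc]

theorem signedFace_sum_comp_signedFace_sum (hs : IsPresimplicial d) {n m : ℕ} (hm : m ≤ n + 1) :
    (∑ j ∈ Finset.range (m + 1), signedFace d n j) ∘ₗ
      (∑ i ∈ Finset.range (m + 2), signedFace d (n + 1) i) = 0 := by
  simp only [LinearMap.finsetSum_comp, LinearMap.comp_finsetSum]
  convert sum_sum_neg_one_pow_smul_eq_zero m (fun i j => d n j ∘ₗ d (n + 1) i)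
    (fun i j hji hi => hs n i j hji (by omega)) using 3 with i _ j _
  simp only [signedFace, LinearMap.smul_comp, LinearMap.comp_smul, smul_smul, pow_add]

theorem hochschildBoundary_comp_hochschildBoundary (hs : IsPresimplicial d) (n : ℕ) :
    hochschildBoundary d n ∘ₗ hochschildBoundary d (n + 1) = 0 :=
  signedFace_sum_comp_signedFace_sum hs le_rfl

theorem barBoundary_comp_barBoundary (hs : IsPresimplicial d) (n : ℕ) :
    barBoundary d n ∘ₗ barBoundary d (n + 1) = 0 :=
  signedFace_sum_comp_signedFace_sum hs (Nat.le_succ n)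

end Precyclic

def collapse (i x : ℕ) : ℕ := if x ≤ i then x else x - 1

theorem mem_preim {i p x : ℕ} : x ∈ preim i p ↔ collapse i x = p := by
  unfold preim collapse
  split_ifs <;> simp only [Finset.mem_singleton, Finset.mem_insert] <;> omega

theorem preim_lt {i p : ℕ} (h : p < i) : preim i p = {p} := by simp [preim, h]

theorem preim_self (i : ℕ) : preim i i = {i, i + 1} := by simp [preim]

theorem preim_gt {i p : ℕ} (h : i < p) : preim i p = {p + 1} := by
  rw [preim, if_neg (by omega), if_neg (by omega)]

theorem preim_succ {j p : ℕ} (hp : 1 ≤ p) :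
    preim (j + 1) p = (preim j (p - 1)).map (addRightEmbedding 1) := by
  rcases lt_trichotomy p (j + 1) with h | rfl | h
  · rw [preim_lt h, preim_lt (by omega), Finset.map_singleton, addRightEmbedding_apply]
    congr 1; omega
  · simp [preim_self]
  · rw [preim_gt h, preim_gt (by omega), Finset.map_singleton, addRightEmbedding_apply]
    congr 1; omega

theorem ne_zero_of_mem_preim {i p u : ℕ} (hp : 1 ≤ p) (hu : u ∈ preim i p) : u ≠ 0 := by
  rintro rfl
  have hcu := mem_preim.1 hu
  rw [collapse, if_pos (Nat.zero_le i)] at hcu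
  omega

theorem preim_biUnion_preim_succ {i j : ℕ} (h : i ≤ j) (p : ℕ) :
    (preim i p).biUnion (preim (j + 1)) = (preim j p).biUnion (preim i) := by
  ext x
  simp only [Finset.mem_biUnion, mem_preim]
  constructor
  · rintro ⟨u, hu, rfl⟩
    exact ⟨collapse i x, by unfold collapse at *; split_ifs at * <;> omega, rfl⟩
  · rintro ⟨u, hu, rfl⟩
    exact ⟨collapse (j + 1) x, by unfold collapse at *; split_ifs at * <;> omega, rfl⟩

theorem rotA_zero {X : Type} (n : ℕ) (a : ℕ → X) : rotA X n a 0 = a n := if_pos rfl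

theorem rotA_of_ne_zero {X : Type} {r : ℕ} (n : ℕ) (a : ℕ → X) (h : r ≠ 0) :
    rotA X n a r = a (r - 1) :=
  if_neg h

theorem rotB_zero {X : Type} (n q : ℕ) (β : ℕ → ℕ → X) : rotB X n β 0 q = β (q - 1) n := if_pos rfl

theorem rotB_of_ne_zero {X : Type} {p : ℕ} (n q : ℕ) (β : ℕ → ℕ → X) (h : p ≠ 0) :
    rotB X n β p q = β (p - 1) (q - 1) := if_neg h

section MergeB

variable {B}

theorem prod_preim_preim_eq_prod_biUnion (i m : ℕ) (β : ℕ → ℕ → B) (p q : ℕ) :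
    mergeB B i (mergeB B m β) p q =
      ∏ u ∈ (preim i p).biUnion (preim m), ∏ v ∈ (preim i q).biUnion (preim m), β u v := by
  have hdisj : ∀ s : Finset ℕ, Set.PairwiseDisjoint (↑s) (preim m) := fun s p _ q _ hpq =>
    Finset.disjoint_left.2 fun x hx hx' => hpq ((mem_preim.1 hx).symm.trans (mem_preim.1 hx'))
  simp only [mergeB, Finset.prod_biUnion (hdisj _)]
  exact Finset.prod_congr rfl fun u _ => Finset.prod_comm

theorem prod_pair_succ (f : ℕ → B) (x : ℕ) : ∏ v ∈ ({x, x + 1} : Finset ℕ), f v = f x * f (x + 1) :=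
  Finset.prod_pair (by omega)

theorem cmergeB_zero (m q : ℕ) (β : ℕ → ℕ → B) : cmergeB B m β 0 q = β q m * β 0 q := if_pos rfl

theorem cmergeB_of_ne_zero {p : ℕ} (m q : ℕ) (β : ℕ → ℕ → B) (h : p ≠ 0) :
    cmergeB B m β p q = β p q := if_neg h

theorem mergeB_lt_lt {i p q : ℕ} (β : ℕ → ℕ → B) (hp : p < i) (hq : q < i) :
    mergeB B i β p q = β p q := by
  simp [mergeB, preim_lt hp, preim_lt hq]

theorem mergeB_lt_self {i p : ℕ} (β : ℕ → ℕ → B) (hp : p < i) :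
    mergeB B i β p i = β p i * β p (i + 1) := by
  simp [mergeB, preim_lt hp, preim_self]

theorem mergeB_lt_gt {i p q : ℕ} (β : ℕ → ℕ → B) (hp : p < i) (hq : i < q) :
    mergeB B i β p q = β p (q + 1) := by
  simp [mergeB, preim_lt hp, preim_gt hq]

theorem mergeB_self_gt {i q : ℕ} (β : ℕ → ℕ → B) (hq : i < q) :
    mergeB B i β i q = β i (q + 1) * β (i + 1) (q + 1) := by
  simp [mergeB, preim_self, preim_gt hq]

theorem mergeB_gt_gt {i p q : ℕ} (β : ℕ → ℕ → B) (hp : i < p) (hq : i < q) :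
    mergeB B i β p q = β (p + 1) (q + 1) := by
  simp [mergeB, preim_gt hp, preim_gt hq]

end MergeB

section MergeA

variable {k A B} (ε : B →ₐ[k] A)

theorem mergeA_lt {i r : ℕ} (a : ℕ → A) (β : ℕ → ℕ → B) (h : r < i) :
    mergeA k A B ε i a β r = a r := if_pos h

theorem mergeA_self (i : ℕ) (a : ℕ → A) (β : ℕ → ℕ → B) :
    mergeA k A B ε i a β i = a i * a (i + 1) * ε (β i (i + 1)) := by
  rw [mergeA, if_neg (lt_irrefl i), if_pos rfl]

theorem mergeA_gt {i r : ℕ} (a : ℕ → A) (β : ℕ → ℕ → B) (h : i < r) :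
    mergeA k A B ε i a β r = a (r + 1) := by
  rw [mergeA, if_neg (by omega), if_neg (by omega)]

theorem cmergeA_zero (m : ℕ) (a : ℕ → A) (β : ℕ → ℕ → B) :
    cmergeA k A B ε m a β 0 = a m * a 0 * ε (β 0 m) := if_pos rfl

theorem cmergeA_of_ne_zero {r : ℕ} (m : ℕ) (a : ℕ → A) (β : ℕ → ℕ → B) (h : r ≠ 0) :
    cmergeA k A B ε m a β r = a r := if_neg h

-- merging three consecutive diagonal entries in either order agrees; this is where the
-- centrality of `ε` is needed
theorem merge_assoc (hcent : ∀ b a, ε b * a = a * ε b) (p q r : A) (x y z : B) :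
    p * (q * r * ε x) * ε (y * z) = p * q * ε y * r * ε (z * x) := by
  rw [mul_assoc (p * q) (ε y), hcent, ← mul_assoc]
  simp only [mul_assoc, ← map_mul]
  congr 4
  ring

theorem mergeA_mergeA_succ (hcent : ∀ b a, ε b * a = a * ε b) {i j : ℕ} (hij : i ≤ j)
    (a : ℕ → A) (β : ℕ → ℕ → B) (r : ℕ) :
    mergeA k A B ε i (mergeA k A B ε (j + 1) a β) (mergeB B (j + 1) β) r =
      mergeA k A B ε j (mergeA k A B ε i a β) (mergeB B i β) r := by
  rcases lt_trichotomy r i with h | rfl | h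
  · rw [mergeA_lt ε _ _ h, mergeA_lt ε _ _ (by omega),
      mergeA_lt ε _ _ (by omega), mergeA_lt ε _ _ h]
  · rcases eq_or_lt_of_le hij with rfl | hij'
    · rw [mergeA_self, mergeA_lt ε _ _ (by omega), mergeA_self,
        mergeB_lt_self _ (by omega), mergeA_self, mergeA_self,
        mergeA_gt ε _ _ (by omega), mergeB_self_gt _ (by omega)]
      exact merge_assoc ε hcent _ _ _ _ _ _
    · rw [mergeA_self, mergeA_lt ε _ _ (by omega),
        mergeA_lt ε _ _ (by omega), mergeB_lt_lt _ (by omega) (by omega),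
        mergeA_lt ε _ _ hij', mergeA_self]
  · rcases lt_trichotomy r j with h2 | rfl | h2
    · rw [mergeA_gt ε _ _ h, mergeA_lt ε _ _ (by omega),
        mergeA_lt ε _ _ h2, mergeA_gt ε _ _ h]
    · rw [mergeA_gt ε _ _ h, mergeA_self, mergeA_self,
        mergeA_gt ε _ _ h, mergeA_gt ε _ _ (by omega),
        mergeB_gt_gt _ h (by omega)]
    · rw [mergeA_gt ε _ _ h, mergeA_gt ε _ _ (by omega),
        mergeA_gt ε _ _ h2, mergeA_gt ε _ _ (by omega)]

theorem mergeB_mergeB_succ {i j : ℕ} (hij : i ≤ j) (β : ℕ → ℕ → B) (p q : ℕ) :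
    mergeB B i (mergeB B (j + 1) β) p q = mergeB B j (mergeB B i β) p q := by
  rw [prod_preim_preim_eq_prod_biUnion, prod_preim_preim_eq_prod_biUnion,
    preim_biUnion_preim_succ hij, preim_biUnion_preim_succ hij]

theorem mergeA_cmergeA (hcent : ∀ b a, ε b * a = a * ε b) {n i : ℕ} (hi : i ≤ n)
    (a : ℕ → A) (β : ℕ → ℕ → B) (r : ℕ) :
    mergeA k A B ε i (cmergeA k A B ε (n + 2) a β) (cmergeB B (n + 2) β) r =
      cmergeA k A B ε (n + 1) (mergeA k A B ε i a β) (mergeB B i β) r := by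
  by_cases hr : r = 0
  · subst hr
    by_cases hi0 : i = 0
    · subst hi0
      rw [mergeA_self, cmergeA_zero, cmergeA_of_ne_zero ε _ _ _ (by omega),
        cmergeB_zero, cmergeA_zero, mergeA_gt ε _ _ (by omega), mergeA_self,
        mergeB_self_gt _ (by omega)]
      exact (merge_assoc ε hcent _ _ _ _ _ _).symm
    · rw [mergeA_lt ε _ _ (by omega), cmergeA_zero, cmergeA_zero,
        mergeA_gt ε _ _ (by omega), mergeA_lt ε _ _ (by omega),
        mergeB_lt_gt _ (by omega) (by omega)]
  · rcases lt_trichotomy r i with h | rfl | h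
    · rw [mergeA_lt ε _ _ h, cmergeA_of_ne_zero ε _ _ _ hr,
        cmergeA_of_ne_zero ε _ _ _ hr, mergeA_lt ε _ _ h]
    · rw [mergeA_self, cmergeA_of_ne_zero ε _ _ _ hr,
        cmergeA_of_ne_zero ε _ _ _ (by omega), cmergeB_of_ne_zero _ _ _ hr,
        cmergeA_of_ne_zero ε _ _ _ hr, mergeA_self]
    · rw [mergeA_gt ε _ _ h, cmergeA_of_ne_zero ε _ _ _ (by omega),
        cmergeA_of_ne_zero ε _ _ _ hr, mergeA_gt ε _ _ h]

theorem mergeB_cmergeB {n i : ℕ} (hi : i ≤ n) (β : ℕ → ℕ → B) (p q : ℕ) (hpq : p < q) :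
    mergeB B i (cmergeB B (n + 2) β) p q =
      cmergeB B (n + 1) (mergeB B i β) p q := by
  by_cases hp : p = 0
  · subst hp
    rw [cmergeB_zero]
    by_cases hi0 : i = 0
    · subst hi0
      simp only [mergeB, preim_self, preim_gt hpq, preim_gt (show (0 : ℕ) < n + 1 by omega),
        prod_pair_succ, Finset.prod_singleton]
      rw [cmergeB_zero (n + 2) (q + 1) β, cmergeB_of_ne_zero (n + 2) (q + 1) β (by omega)]
      ring
    · simp only [mergeB, preim_lt (show (0 : ℕ) < i by omega),
        preim_gt (show i < n + 1 by omega), Finset.prod_singleton]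
      rw [Finset.prod_congr rfl fun v _ => cmergeB_zero (n + 2) v β,
        Finset.prod_mul_distrib]
  · simp only [mergeB]
    rw [Finset.prod_congr rfl fun u hu => Finset.prod_congr rfl fun v _ =>
      cmergeB_of_ne_zero _ _ _ (ne_zero_of_mem_preim (by omega) hu)]
    rw [cmergeB_of_ne_zero _ _ _ hp]
    rfl

theorem cmergeA_cmergeA (hcent : ∀ b a, ε b * a = a * ε b) {n : ℕ}
    (a : ℕ → A) (β : ℕ → ℕ → B) (r : ℕ) (hr : r < n + 1) :
    cmergeA k A B ε (n + 1) (cmergeA k A B ε (n + 2) a β) (cmergeB B (n + 2) β) r =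
      cmergeA k A B ε (n + 1) (mergeA k A B ε (n + 1) a β) (mergeB B (n + 1) β) r := by
  by_cases h0 : r = 0
  · subst h0
    rw [cmergeA_zero, cmergeA_zero, cmergeA_of_ne_zero ε _ _ _ (by omega),
      cmergeB_zero, cmergeA_zero, mergeA_self, mergeA_lt ε _ _ (by omega),
      mergeB_lt_self _ (by omega)]
    exact merge_assoc ε hcent _ _ _ _ _ _
  · rw [cmergeA_of_ne_zero ε _ _ _ h0, cmergeA_of_ne_zero ε _ _ _ h0,
      cmergeA_of_ne_zero ε _ _ _ h0, mergeA_lt ε _ _ (by omega)]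

theorem cmergeB_cmergeB {n : ℕ} (β : ℕ → ℕ → B) (p q : ℕ) (hpq : p < q) (hq : q < n + 1) :
    cmergeB B (n + 1) (cmergeB B (n + 2) β) p q =
      cmergeB B (n + 1) (mergeB B (n + 1) β) p q := by
  by_cases hp : p = 0
  · subst hp
    rw [cmergeB_zero (n + 1) q (cmergeB B (n + 2) β),
      cmergeB_zero (n + 1) q (mergeB B (n + 1) β),
      cmergeB_of_ne_zero (n + 2) (n + 1) β (by omega), cmergeB_zero (n + 2) q β,
      mergeB_lt_self _ (by omega), mergeB_lt_lt _ (by omega) (by omega)]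
    ring
  · rw [cmergeB_of_ne_zero _ _ _ hp, cmergeB_of_ne_zero _ _ _ hp, cmergeB_of_ne_zero _ _ _ hp,
      mergeB_lt_lt _ (by omega) (by omega)]

theorem mergeA_succ_rotA {n j : ℕ} (hj : j + 1 ≤ n) (a : ℕ → A) (β : ℕ → ℕ → B) (r : ℕ) :
    mergeA k A B ε (j + 1) (rotA A (n + 1) a) (rotB B (n + 1) β) r =
      rotA A n (mergeA k A B ε j a β) r := by
  by_cases h0 : r = 0
  · subst h0
    rw [mergeA_lt ε _ _ (by omega), rotA_zero, rotA_zero,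
      mergeA_gt ε _ _ (by omega)]
  · rcases lt_trichotomy r (j + 1) with h | rfl | h
    · rw [mergeA_lt ε _ _ h, rotA_of_ne_zero _ _ h0, rotA_of_ne_zero _ _ h0,
        mergeA_lt ε _ _ (by omega)]
    · rw [mergeA_self, rotA_of_ne_zero _ _ (by omega), rotA_of_ne_zero _ _ (by omega),
        rotB_of_ne_zero _ _ _ (by omega), rotA_of_ne_zero _ _ h0]
      simp only [Nat.add_sub_cancel]
      rw [mergeA_self]
    · rw [mergeA_gt ε _ _ h, rotA_of_ne_zero _ _ (by omega), rotA_of_ne_zero _ _ h0,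
        mergeA_gt ε _ _ (by omega)]
      simp only [Nat.add_sub_cancel]
      congr 1
      omega

theorem mergeB_succ_rotB {n j : ℕ} (hj : j + 1 ≤ n) (β : ℕ → ℕ → B) (p q : ℕ) (hpq : p < q) :
    mergeB B (j + 1) (rotB B (n + 1) β) p q =
      rotB B n (mergeB B j β) p q := by
  by_cases hp : p = 0
  · subst hp
    rw [rotB_zero]
    simp only [mergeB, preim_lt (show (0 : ℕ) < j + 1 by omega), Finset.prod_singleton]
    rcases lt_trichotomy q (j + 1) with h | rfl | h
    · rw [preim_lt h, Finset.prod_singleton, rotB_zero,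
        preim_lt (show q - 1 < j by omega), preim_gt (show j < n by omega),
        Finset.prod_singleton, Finset.prod_singleton]
    · rw [preim_self, prod_pair_succ, rotB_zero, rotB_zero]
      simp only [Nat.add_sub_cancel]
      rw [preim_self, preim_gt (show j < n by omega), prod_pair_succ]
      simp only [Finset.prod_singleton]
    · rw [preim_gt h, Finset.prod_singleton, rotB_zero]
      simp only [Nat.add_sub_cancel]
      rw [preim_gt (show j < q - 1 by omega), preim_gt (show j < n by omega),
        Finset.prod_singleton, Finset.prod_singleton]
      congr 1
      omega
  · rw [rotB_of_ne_zero _ _ _ hp]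
    simp only [mergeB, preim_succ (show 1 ≤ p by omega), preim_succ (show 1 ≤ q by omega),
      Finset.prod_map, addRightEmbedding_apply]
    refine Finset.prod_congr rfl fun u _ => Finset.prod_congr rfl fun v _ => ?_
    rw [rotB_of_ne_zero _ _ _ (by omega)]
    simp only [Nat.add_sub_cancel]

theorem mergeA_zero_rotA {n : ℕ} (a : ℕ → A) (β : ℕ → ℕ → B) (r : ℕ) :
    mergeA k A B ε 0 (rotA A (n + 1) a) (rotB B (n + 1) β) r =
      cmergeA k A B ε (n + 1) a β r := by
  by_cases h0 : r = 0
  · subst h0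
    rw [mergeA_self, rotA_zero, rotA_of_ne_zero _ _ (by omega), rotB_zero,
      cmergeA_zero]
  · rw [mergeA_gt ε _ _ (by omega), rotA_of_ne_zero _ _ (by omega),
      cmergeA_of_ne_zero ε _ _ _ h0]
    simp only [Nat.add_sub_cancel]

theorem mergeB_zero_rotB {n : ℕ} (β : ℕ → ℕ → B) (p q : ℕ) (hpq : p < q) :
    mergeB B 0 (rotB B (n + 1) β) p q = cmergeB B (n + 1) β p q := by
  by_cases hp : p = 0
  · subst hp
    rw [cmergeB_zero]
    simp only [mergeB, preim_self, preim_gt hpq, prod_pair_succ, Finset.prod_singleton]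
    rw [rotB_zero, rotB_of_ne_zero _ _ _ (by omega)]
    simp only [Nat.add_sub_cancel]
  · rw [cmergeB_of_ne_zero _ _ _ hp]
    simp only [mergeB, preim_gt (show (0 : ℕ) < p by omega), preim_gt (show (0 : ℕ) < q by omega),
      Finset.prod_singleton]
    rw [rotB_of_ne_zero _ _ _ (by omega)]
    simp only [Nat.add_sub_cancel]

theorem cmergeA_rotA {n : ℕ} (a : ℕ → A) (β : ℕ → ℕ → B) (r : ℕ) (hr : r < n + 1) :
    cmergeA k A B ε (n + 1) (rotA A (n + 1) a) (rotB B (n + 1) β) r =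
      rotA A n (mergeA k A B ε n a β) r := by
  by_cases h0 : r = 0
  · subst h0
    rw [cmergeA_zero, rotA_zero, rotA_of_ne_zero _ _ (by omega), rotB_zero, rotA_zero,
      mergeA_self]
    simp only [Nat.add_sub_cancel]
  · rw [cmergeA_of_ne_zero ε _ _ _ h0, rotA_of_ne_zero _ _ h0, rotA_of_ne_zero _ _ h0,
      mergeA_lt ε _ _ (by omega)]

theorem cmergeB_rotB {n : ℕ} (β : ℕ → ℕ → B) (p q : ℕ) (hpq : p < q) (hq : q < n + 1) :
    cmergeB B (n + 1) (rotB B (n + 1) β) p q =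
      rotB B n (mergeB B n β) p q := by
  by_cases hp : p = 0
  · subst hp
    rw [cmergeB_zero, rotB_zero, rotB_of_ne_zero _ _ _ (by omega), rotB_zero,
      mergeB_lt_self _ (by omega)]
    simp only [Nat.add_sub_cancel]
  · rw [cmergeB_of_ne_zero _ _ _ hp, rotB_of_ne_zero _ _ _ hp, rotB_of_ne_zero _ _ _ hp,
      mergeB_lt_lt _ (by omega) (by omega)]

end MergeA

-- `j - t` modulo `n + 1`, written without truncated subtraction
def rotIndex (n t j : ℕ) : ℕ := (j + t * n) % (n + 1)

theorem rotIndex_lt (n t j : ℕ) : rotIndex n t j < n + 1 := Nat.mod_lt _ (by omega)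

theorem rotIndex_zero {n j : ℕ} (h : j < n + 1) : rotIndex n 0 j = j := by
  simp [rotIndex, Nat.mod_eq_of_lt h]

theorem rotIndex_succ (n t j : ℕ) :
    rotIndex n (t + 1) j = if rotIndex n t j = 0 then n else rotIndex n t j - 1 := by
  have hlt := rotIndex_lt n t j
  rw [show rotIndex n (t + 1) j = (rotIndex n t j + n) % (n + 1) by
    rw [rotIndex, rotIndex, Nat.mod_add_mod, Nat.succ_mul, ← Nat.add_assoc]]
  split_ifs with h0
  · rw [h0, zero_add, Nat.mod_eq_of_lt (by omega)]
  · rw [show rotIndex n t j + n = (n + 1) + (rotIndex n t j - 1) by omega, Nat.add_mod_left,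
      Nat.mod_eq_of_lt (by omega)]

theorem eq_of_rotIndex_eq {n t p q : ℕ} (hp : p < n + 1) (hq : q < n + 1)
    (h : rotIndex n t p = rotIndex n t q) : p = q :=
  (Nat.ModEq.add_right_cancel' (t * n) h).eq_of_lt_of_lt hp hq

theorem rotIndex_self {n j : ℕ} (h : j < n + 1) : rotIndex n (n + 1) j = j := by
  rw [rotIndex, mul_comm, Nat.add_mul_mod_self_right, Nat.mod_eq_of_lt h]

theorem rotA_iterate_apply {X : Type} (n t : ℕ) (a : ℕ → X) {j : ℕ} (hj : j < n + 1) :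
    (rotA X n)^[t] a j = a (rotIndex n t j) := by
  induction t generalizing a with
  | zero => rw [Function.iterate_zero_apply, rotIndex_zero hj]
  | succ t ih =>
    rw [Function.iterate_succ_apply, ih, rotIndex_succ, rotA]
    split_ifs <;> rfl

-- the rotation is not monotone, so the entry above the diagonal is read with sorted indices
theorem rotB_iterate_apply {X : Type} (n t : ℕ) (β : ℕ → ℕ → X) {p q : ℕ} (hpq : p < q)
    (hq : q < n + 1) :
    (rotB X n)^[t] β p q =
      if rotIndex n t p < rotIndex n t q then β (rotIndex n t p) (rotIndex n t q)
      else β (rotIndex n t q) (rotIndex n t p) := by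
  induction t generalizing β with
  | zero => simp [rotIndex_zero (show p < n + 1 by omega), rotIndex_zero hq, hpq]
  | succ t ih =>
    rw [Function.iterate_succ_apply, ih]
    have hne : rotIndex n t p ≠ rotIndex n t q := fun h => by
      have := eq_of_rotIndex_eq (show p < n + 1 by omega) hq h; omega
    have hp := rotIndex_lt n t p
    have hq := rotIndex_lt n t q
    simp only [rotIndex_succ, rotB]
    split_ifs <;> first | rfl | omega

-- A matrix of size `m` is given by its diagonal `a j ∈ A` and its entries `β p q ∈ B` above the
-- diagonal (`p < q`), read only for indices `< m`: sizes are recorded by the window relation.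
abbrev Entries (A B : Type) : Type := (ℕ → A) × (ℕ → ℕ → B)

section Entries

variable {k A B}

def WindowEq (m : ℕ) (x y : Entries A B) : Prop :=
  (∀ j < m, x.1 j = y.1 j) ∧ ∀ p q, p < q → q < m → x.2 p q = y.2 p q

def windowSetoid (m : ℕ) : Setoid (Entries A B) where
  r := WindowEq m
  iseqv :=
    { refl := fun _ => ⟨fun _ _ => rfl, fun _ _ _ _ => rfl⟩
      symm := fun h => ⟨fun j hj => (h.1 j hj).symm, fun p q hpq hq => (h.2 p q hpq hq).symm⟩
      trans := fun h h' => ⟨fun j hj => (h.1 j hj).trans (h'.1 j hj),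
        fun p q hpq hq => (h.2 p q hpq hq).trans (h'.2 p q hpq hq)⟩ }

theorem gen_eq_of_windowEq {m : ℕ} {x y : Entries A B} (h : WindowEq m x y) :
    gen k A B m x.1 x.2 = gen k A B m y.1 y.2 := by
  unfold gen
  congr 1
  · exact congrArg _ (funext fun i => h.1 i i.2)
  · exact congrArg _ (funext fun p => h.2 _ _ p.2 p.1.2.2)

theorem span_range_gen (m : ℕ) :
    Submodule.span k (Set.range fun x : Entries A B => gen k A B m x.1 x.2) = ⊤ := by
  rw [eq_top_iff]
  change ⊤ ≤ (Submodule.span k _ : Submodule k ((⨂[k] _ : Fin m, A) ⊗[k] (⨂[k] _ : UT m, B)))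
  rw [← TensorProduct.map₂_mk_top_top_eq_top, ← PiTensorProduct.span_tprod_eq_top,
    ← PiTensorProduct.span_tprod_eq_top, Submodule.map₂_span_span, Submodule.span_le]
  rintro _ ⟨_, ⟨fA, rfl⟩, _, ⟨fB, rfl⟩, rfl⟩
  refine Submodule.subset_span ⟨(fun j => if h : j < m then fA ⟨j, h⟩ else 1,
    fun p q => if h : p < m ∧ q < m ∧ p < q then fB ⟨(⟨p, h.1⟩, ⟨q, h.2.1⟩), h.2.2⟩ else 1), ?_⟩
  simp only [gen, TensorProduct.mk_apply]
  congr 2 <;> funext i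
  · simp
  · simp [i.2, i.1.2.isLt, i.1.1.isLt]

end Entries

section Faces

variable {k A B} (ε : B →ₐ[k] A)

def matFace (n i : ℕ) (x : Entries A B) : Entries A B :=
  if i < n + 1 then (mergeA k A B ε i x.1 x.2, mergeB B i x.2)
  else (cmergeA k A B ε (n + 1) x.1 x.2, cmergeB B (n + 1) x.2)

def matRot (n : ℕ) : Entries A B → Entries A B := Prod.map (rotA A n) (rotB B n)

theorem matFace_of_lt {n i : ℕ} (h : i < n + 1) (x : Entries A B) :
    matFace ε n i x = (mergeA k A B ε i x.1 x.2, mergeB B i x.2) := if_pos h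

theorem matFace_last (n : ℕ) (x : Entries A B) :
    matFace ε n (n + 1) x = (cmergeA k A B ε (n + 1) x.1 x.2, cmergeB B (n + 1) x.2) :=
  if_neg (lt_irrefl _)

theorem windowEq_matFace {n i : ℕ} {x y : Entries A B} (h : WindowEq (n + 2) x y) :
    WindowEq (n + 1) (matFace ε n i x) (matFace ε n i y) := by
  obtain ⟨ha, hb⟩ := h
  unfold matFace
  split_ifs with hi
  · refine ⟨fun r hr => ?_, fun p q hpq hq => ?_⟩
    · simp only [mergeA]
      split_ifs
      · exact ha r (by omega)
      · rw [ha i (by omega), ha (i + 1) (by omega), hb i (i + 1) (by omega) (by omega)]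
      · exact ha _ (by omega)
    · refine Finset.prod_congr rfl fun u hu => Finset.prod_congr rfl fun v hv => hb u v ?_ ?_ <;>
      · rw [mem_preim, collapse] at hu hv
        split_ifs at hu hv <;> omega
  · refine ⟨fun r hr => ?_, fun p q hpq hq => ?_⟩
    · simp only [cmergeA]
      split_ifs
      · rw [ha (n + 1) (by omega), ha 0 (by omega), hb 0 (n + 1) (by omega) (by omega)]
      · exact ha r (by omega)
    · simp only [cmergeB]
      split_ifs
      · rw [hb q (n + 1) (by omega) (by omega), hb 0 q (by omega) (by omega)]
      · exact hb p q hpq (by omega)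

theorem windowEq_matRot {X Y : Type} {n : ℕ} {x y : Entries X Y} (h : WindowEq (n + 1) x y) :
    WindowEq (n + 1) (matRot n x) (matRot n y) := by
  refine ⟨fun r hr => ?_, fun p q hpq hq => ?_⟩
  · simp only [matRot, Prod.map, rotA]
    split_ifs <;> exact h.1 _ (by omega)
  · simp only [matRot, Prod.map, rotB]
    split_ifs <;> exact h.2 _ _ (by omega) (by omega)

theorem windowEq_matFace_matFace (hcent : ∀ b a, ε b * a = a * ε b) {n i j : ℕ} (hji : j < i)
    (hi : i ≤ n + 2) (x : Entries A B) :
    WindowEq (n + 1) (matFace ε n j (matFace ε (n + 1) i x))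
      (matFace ε n (i - 1) (matFace ε (n + 1) j x)) := by
  rcases (by omega : i < n + 2 ∨ i = n + 2) with hi' | rfl
  · obtain ⟨i, rfl⟩ : ∃ i', i = i' + 1 := ⟨i - 1, by omega⟩
    rw [matFace_of_lt ε hi', matFace_of_lt ε (show j < n + 1 by omega),
      matFace_of_lt ε (show j < n + 2 by omega), Nat.add_sub_cancel,
      matFace_of_lt ε (show i < n + 1 by omega)]
    exact ⟨fun r _ => mergeA_mergeA_succ ε hcent (by omega) x.1 x.2 r,
      fun p q _ _ => mergeB_mergeB_succ (by omega) x.2 p q⟩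
  · rw [matFace_last ε (n + 1), show n + 2 - 1 = n + 1 from rfl, matFace_last ε n]
    rcases (by omega : j < n + 1 ∨ j = n + 1) with hj | rfl
    · rw [matFace_of_lt ε hj, matFace_of_lt ε (show j < n + 2 by omega)]
      exact ⟨fun r _ => mergeA_cmergeA ε hcent (by omega) x.1 x.2 r,
        fun p q hpq _ => mergeB_cmergeB (by omega) x.2 p q hpq⟩
    · rw [matFace_last ε n, matFace_of_lt ε (show n + 1 < n + 2 by omega)]
      exact ⟨fun r hr => cmergeA_cmergeA ε hcent x.1 x.2 r hr,
        fun p q hpq hq => cmergeB_cmergeB x.2 p q hpq hq⟩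

theorem windowEq_matFace_matRot {n i : ℕ} (h1 : 1 ≤ i) (h2 : i ≤ n + 1) (x : Entries A B) :
    WindowEq (n + 1) (matFace ε n i (matRot (n + 1) x)) (matRot n (matFace ε n (i - 1) x)) := by
  rcases (by omega : i < n + 1 ∨ i = n + 1) with hi | rfl
  · obtain ⟨i, rfl⟩ : ∃ i', i = i' + 1 := ⟨i - 1, by omega⟩
    rw [matFace_of_lt ε hi, Nat.add_sub_cancel, matFace_of_lt ε (show i < n + 1 by omega)]
    exact ⟨fun r _ => mergeA_succ_rotA ε (by omega) x.1 x.2 r,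
      fun p q hpq _ => mergeB_succ_rotB (by omega) x.2 p q hpq⟩
  · rw [matFace_last, Nat.add_sub_cancel, matFace_of_lt ε (show n < n + 1 by omega)]
    exact ⟨fun r hr => cmergeA_rotA ε x.1 x.2 r hr, fun p q hpq hq => cmergeB_rotB x.2 p q hpq hq⟩

theorem windowEq_matFace_zero_matRot (n : ℕ) (x : Entries A B) :
    WindowEq (n + 1) (matFace ε n 0 (matRot (n + 1) x)) (matFace ε n (n + 1) x) := by
  rw [matFace_of_lt ε (show 0 < n + 1 by omega), matFace_last]
  exact ⟨fun r _ => mergeA_zero_rotA ε x.1 x.2 r, fun p q hpq _ => mergeB_zero_rotB x.2 p q hpq⟩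

end Faces

theorem windowEq_matRot_iterate {X Y : Type} (n : ℕ) (x : Entries X Y) :
    WindowEq (n + 1) ((matRot n)^[n + 1] x) x := by
  refine ⟨fun j hj => ?_, fun p q hpq hq => ?_⟩
  · rw [matRot, Prod.map_iterate, Prod.map_fst, rotA_iterate_apply n _ _ hj, rotIndex_self hj]
  · rw [matRot, Prod.map_iterate, Prod.map_snd, rotB_iterate_apply n _ _ hpq hq,
      rotIndex_self hq, rotIndex_self (show p < n + 1 by omega), if_pos hpq]

abbrev UTMat (X Y : Type) (m : ℕ) : Type := Quotient (windowSetoid m : Setoid (Entries X Y))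

def UTMat.rot {X Y : Type} (n : ℕ) : UTMat X Y (n + 1) → UTMat X Y (n + 1) :=
  Quotient.map (matRot n) fun _ _ => windowEq_matRot

theorem UTMat.rot_iterate {X Y : Type} (n : ℕ) :
    (UTMat.rot n)^[n + 1] = (id : UTMat X Y (n + 1) → UTMat X Y (n + 1)) := by
  have hmk : Function.Semiconj (Quotient.mk _) (matRot n) (UTMat.rot (X := X) (Y := Y) n) :=
    fun _ => rfl
  refine funext <| Quotient.ind fun x => ?_
  rw [← hmk.iterate_right (n + 1) x]
  exact Quotient.sound (windowEq_matRot_iterate n x)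

abbrev Chains (n : ℕ) : Type := UTMat A B (n + 1) →₀ k

section Chains

variable {k A B} (ε : B →ₐ[k] A)

def UTMat.face (n i : ℕ) : UTMat A B (n + 2) → UTMat A B (n + 1) :=
  Quotient.map (matFace ε n i) fun _ _ => windowEq_matFace ε

def UTMat.pureTensor (m : ℕ) : UTMat A B m → TS k A B m :=
  Quotient.lift (fun x => gen k A B m x.1 x.2) fun _ _ => gen_eq_of_windowEq

theorem UTMat.face_comp_face (hcent : ∀ b a, ε b * a = a * ε b) {n i j : ℕ} (hji : j < i)
    (hi : i ≤ n + 2) :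
    UTMat.face ε n j ∘ UTMat.face ε (n + 1) i = UTMat.face ε n (i - 1) ∘ UTMat.face ε (n + 1) j :=
  funext <| Quotient.ind fun x => Quotient.sound (windowEq_matFace_matFace ε hcent hji hi x)

theorem UTMat.face_comp_rot {n i : ℕ} (h1 : 1 ≤ i) (h2 : i ≤ n + 1) :
    UTMat.face ε n i ∘ UTMat.rot (n + 1) = UTMat.rot n ∘ UTMat.face ε n (i - 1) :=
  funext <| Quotient.ind fun x => Quotient.sound (windowEq_matFace_matRot ε h1 h2 x)

theorem UTMat.face_zero_comp_rot (n : ℕ) :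
    UTMat.face ε n 0 ∘ UTMat.rot (n + 1) = UTMat.face ε n (n + 1) :=
  funext <| Quotient.ind fun x => Quotient.sound (windowEq_matFace_zero_matRot ε n x)

def chainFace (n i : ℕ) : Chains k A B (n + 1) →ₗ[k] Chains k A B n :=
  Finsupp.lmapDomain k k (UTMat.face ε n i)

def chainRot (n : ℕ) : Module.End k (Chains k A B n) :=
  Finsupp.lmapDomain k k (UTMat.rot n)

def chainGen (n : ℕ) : Chains k A B n →ₗ[k] TS k A B (n + 1) :=
  Finsupp.linearCombination k (UTMat.pureTensor (n + 1))

theorem isPresimplicial_chainFace (hcent : ∀ b a, ε b * a = a * ε b) :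
    IsPresimplicial (chainFace ε) := fun n i j hji hi => by
  simp only [chainFace, ← Finsupp.lmapDomain_comp, UTMat.face_comp_face ε hcent hji hi]

theorem isPrecyclic_chainFace_chainRot : IsPrecyclic (chainFace ε) (chainRot (k := k)) where
  face_comp_cyc n i h1 h2 := by
    simp only [chainFace, chainRot, ← Finsupp.lmapDomain_comp, UTMat.face_comp_rot ε h1 h2]
  face_zero_comp_cyc n := by
    simp only [chainFace, chainRot, ← Finsupp.lmapDomain_comp, UTMat.face_zero_comp_rot ε n]
  cyc_pow n := by
    rw [chainRot, Finsupp.lmapDomain_pow, UTMat.rot_iterate, Finsupp.lmapDomain_id]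
    rfl

end Chains

section Intertwining

variable {k A B} (ε : B →ₐ[k] A)

theorem chainGen_surjective (n : ℕ) :
    Function.Surjective (chainGen (k := k) (A := A) (B := B) n) := by
  rw [← LinearMap.range_eq_top, chainGen, Finsupp.range_linearCombination, eq_top_iff,
    ← span_range_gen (n + 1)]
  exact Submodule.span_mono (Set.range_subset_iff.2 fun x => ⟨Quotient.mk _ x, rfl⟩)

theorem chainGen_single (n : ℕ) (x : Entries A B) (c : k) :
    chainGen n (Finsupp.single (Quotient.mk _ x) c) = c • gen k A B (n + 1) x.1 x.2 :=
  Finsupp.linearCombination_single k c _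

theorem signedCyc_comp_chainGen {n : ℕ} (lam : Module.End k (TS k A B (n + 1)))
    (hlam : ∀ a β, lam (gen k A B (n + 1) a β) =
      (-1 : ℤ) ^ n • gen k A B (n + 1) (rotA A n a) (rotB B n β)) :
    lam ∘ₗ chainGen n = chainGen n ∘ₗ signedCyc chainRot n := by
  refine Finsupp.lhom_ext fun q c => ?_
  induction q using Quotient.ind with
  | _ x =>
  simp only [LinearMap.comp_apply, signedCyc, LinearMap.smul_apply, chainRot,
    Finsupp.lmapDomain_apply, Finsupp.mapDomain_single, map_zsmul]
  rw [show UTMat.rot n ⟦x⟧ = ⟦matRot n x⟧ from rfl, chainGen_single, chainGen_single, map_smul,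
    hlam, smul_comm]
  rfl

theorem chainGen_chainFace_single (n i : ℕ) (x : Entries A B) (c : k) :
    chainGen n (chainFace ε n i (Finsupp.single (Quotient.mk _ x) c)) =
      c • gen k A B (n + 1) (matFace ε n i x).1 (matFace ε n i x).2 := by
  rw [chainFace, Finsupp.lmapDomain_apply, Finsupp.mapDomain_single]
  exact chainGen_single n (matFace ε n i x) c

theorem hochschildBoundary_comp_chainGen {n : ℕ} (b : TS k A B (n + 2) →ₗ[k] TS k A B (n + 1))
    (hb : ∀ a β, b (gen k A B (n + 2) a β) =
      (∑ i ∈ Finset.range (n + 1), (-1 : ℤ) ^ i •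
          gen k A B (n + 1) (mergeA k A B ε i a β) (mergeB B i β))
        + (-1 : ℤ) ^ (n + 1) •
          gen k A B (n + 1) (cmergeA k A B ε (n + 1) a β) (cmergeB B (n + 1) β)) :
    b ∘ₗ chainGen (n + 1) = chainGen n ∘ₗ hochschildBoundary (chainFace ε) n := by
  refine Finsupp.lhom_ext fun q c => ?_
  induction q using Quotient.ind with
  | _ x =>
  simp only [LinearMap.comp_apply, chainGen_single, map_smul, hb, hochschildBoundary,
    Finset.sum_range_succ _ (n + 1), signedFace, LinearMap.add_apply, LinearMap.sum_apply,
    LinearMap.smul_apply, map_add, map_sum, map_zsmul, chainGen_chainFace_single, matFace_last,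
    smul_add, Finset.smul_sum, smul_comm c]
  congr 1
  refine Finset.sum_congr rfl fun i hi => ?_
  rw [matFace_of_lt ε (Finset.mem_range.1 hi)]

theorem barBoundary_comp_chainGen {n : ℕ} (b' : TS k A B (n + 2) →ₗ[k] TS k A B (n + 1))
    (hb' : ∀ a β, b' (gen k A B (n + 2) a β) =
      ∑ i ∈ Finset.range (n + 1), (-1 : ℤ) ^ i •
          gen k A B (n + 1) (mergeA k A B ε i a β) (mergeB B i β)) :
    b' ∘ₗ chainGen (n + 1) = chainGen n ∘ₗ barBoundary (chainFace ε) n := by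
  refine Finsupp.lhom_ext fun q c => ?_
  induction q using Quotient.ind with
  | _ x =>
  simp only [LinearMap.comp_apply, chainGen_single, map_smul, hb', barBoundary, signedFace,
    LinearMap.sum_apply, LinearMap.smul_apply, map_sum, map_zsmul, chainGen_chainFace_single,
    Finset.smul_sum, smul_comm c]
  refine Finset.sum_congr rfl fun i hi => ?_
  rw [matFace_of_lt ε (Finset.mem_range.1 hi)]

end Intertwining

theorem secondary_cyclic_bicomplex_identities
    (ε : B →ₐ[k] A) (hcent : ∀ (b : B) (a : A), ε b * a = a * ε b)
    (lamC : ∀ n : ℕ, Module.End k (TS k A B (n + 1)))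
    (hlam : ∀ (n : ℕ) (a : ℕ → A) (β : ℕ → ℕ → B),
      lamC n (gen k A B (n + 1) a β) =
        (-1 : ℤ) ^ n • gen k A B (n + 1) (rotA A n a) (rotB B n β))
    (bC : ∀ n : ℕ, TS k A B (n + 2) →ₗ[k] TS k A B (n + 1))
    (hb : ∀ (n : ℕ) (a : ℕ → A) (β : ℕ → ℕ → B),
      bC n (gen k A B (n + 2) a β) =
        (∑ i ∈ Finset.range (n + 1), (-1 : ℤ) ^ i •
            gen k A B (n + 1) (mergeA k A B ε i a β) (mergeB B i β))
        + (-1 : ℤ) ^ (n + 1) •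
            gen k A B (n + 1) (cmergeA k A B ε (n + 1) a β) (cmergeB B (n + 1) β))
    (btrC : ∀ n : ℕ, TS k A B (n + 2) →ₗ[k] TS k A B (n + 1))
    (hbtr : ∀ (n : ℕ) (a : ℕ → A) (β : ℕ → ℕ → B),
      btrC n (gen k A B (n + 2) a β) =
        ∑ i ∈ Finset.range (n + 1), (-1 : ℤ) ^ i •
            gen k A B (n + 1) (mergeA k A B ε i a β) (mergeB B i β))
    (N : ∀ n : ℕ, Module.End k (TS k A B (n + 1)))
    (hN : ∀ n, N n = ∑ j ∈ Finset.range (n + 1), lamC n ^ j) :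
    (∀ n, N n * (1 - lamC n) = 0) ∧
    (∀ n, (1 - lamC n) * N n = 0) ∧
    (∀ n, (N n : TS k A B (n + 1) →ₗ[k] TS k A B (n + 1)).comp (bC n) =
      (btrC n).comp (N (n + 1) : TS k A B (n + 2) →ₗ[k] TS k A B (n + 2))) ∧
    (∀ n, ((1 - lamC n : Module.End k (TS k A B (n + 1))) :
        TS k A B (n + 1) →ₗ[k] TS k A B (n + 1)).comp (btrC n) =
      (bC n).comp ((1 - lamC (n + 1) : Module.End k (TS k A B (n + 2))) :
        TS k A B (n + 2) →ₗ[k] TS k A B (n + 2))) ∧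
    (∀ n, (bC n).comp (bC (n + 1)) = 0) ∧
    (∀ n, (btrC n).comp (btrC (n + 1)) = 0) := by
  have hc := isPrecyclic_chainFace_chainRot ε
  have hs := isPresimplicial_chainFace ε hcent
  have hG := chainGen_surjective (k := k) (A := A) (B := B)
  have hlamG n : lamC n ∘ₗ chainGen n = chainGen n ∘ₗ signedCyc chainRot n :=
    signedCyc_comp_chainGen (lamC n) (hlam n)
  have hsubG n := LinearMap.one_sub_comp_eq_comp_one_sub (hlamG n)
  have hNG n : N n ∘ₗ chainGen n = chainGen n ∘ₗ cyclicNorm chainRot n :=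
    hN n ▸ LinearMap.geom_sum_comp_eq_comp_geom_sum (hlamG n) (n + 1)
  have hbG n := hochschildBoundary_comp_chainGen ε (bC n) (hb n)
  have hbtrG n := barBoundary_comp_chainGen ε (btrC n) (hbtr n)
  have hpow n : lamC n ^ (n + 1) = 1 := (LinearMap.cancel_right (hG n)).1 <| by
    rw [LinearMap.pow_comp_eq_comp_pow (hlamG n), signedCyc_pow_succ (hc.cyc_pow n)]
    rfl
  refine ⟨fun n => ?_, fun n => ?_, fun n => ?_, fun n => ?_, fun n => ?_, fun n => ?_⟩
  · rw [hN, geom_sum_mul_neg, hpow, sub_self]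
  · rw [hN, mul_neg_geom_sum, hpow, sub_self]
  · refine (LinearMap.cancel_right (hG (n + 1))).1 ?_
    rw [LinearMap.comp_comp_eq_of_comp_eq (hNG n) (hbG n),
      LinearMap.comp_comp_eq_of_comp_eq (hbtrG n) (hNG (n + 1)),
      cyclicNorm_comp_hochschildBoundary hc]
  · refine (LinearMap.cancel_right (hG (n + 1))).1 ?_
    rw [LinearMap.comp_comp_eq_of_comp_eq (hsubG n) (hbtrG n),
      LinearMap.comp_comp_eq_of_comp_eq (hbG n) (hsubG (n + 1)), one_sub_comp_barBoundary hc]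
  · refine (LinearMap.cancel_right (hG (n + 2))).1 ?_
    rw [LinearMap.comp_comp_eq_of_comp_eq (hbG n) (hbG (n + 1)),
      hochschildBoundary_comp_hochschildBoundary hs, LinearMap.comp_zero, LinearMap.zero_comp]
  · refine (LinearMap.cancel_right (hG (n + 2))).1 ?_
    rw [LinearMap.comp_comp_eq_of_comp_eq (hbtrG n) (hbtrG (n + 1)),
      barBoundary_comp_barBoundary hs, LinearMap.comp_zero, LinearMap.zero_comp]

end
end
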